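/- Let $(\phi_k)$, $2^{m-1}<k\le 2^m$, satisfy the Hölder condition $|\phi_k(t) - \phi_k(t')| \le c\,2^{m/2}(2^m|t-t'|)^{\alpha}\,\xi(2^m(t - t_k))$ for $|t-t'| \le 2^{-m}$, where $0<\alpha\le 1$ and $\xi(x)=(1+|x|)^{-(1+\delta)}$, $0<\delta<1$. Then for any integer $n > m$, any coefficients $a_k$, and any dyadic interval $J$ of length $2^{-(n-1)}$, the oscillation satisfies $\sum_{2^{m-1}<k\le 2^m} |a_k|\,\mathrm{osc}_J(\phi_k) \le C\, 2^{\alpha(m-n)}\, 2^{m/2} \sum_{2^{m-1}<k\le 2^m} |a_k|\, \xi(2^m(x - t_k))$ for any $x \in J$, where $\mathrm{osc}_J(\phi) = \sup_{u,v\in J}|\phi(u)-\phi(v)|$ and $C$ depends only on $c$, $\alpha$, $\delta$. -/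

import Mathlib

/-! The Hölder bound at `u ∈ J` carries the weight `ξ(2^m (u - t_k))`; since `2^m |u - x| ≤ 1`
on `J`, that weight is comparable to the one at the fixed point `x`, uniformly in `k`. Together
with `(2^m |u - v|)^α ≤ (2^{m-n+1})^α` this bounds every oscillation term by the matching term
on the right. -/

open MeasureTheory Set

noncomputable section

/-- The decay profile `ξ(x) = (1+|x|)^{-(1+δ)}`. -/
def xi (δ x : ℝ) : ℝ := (1 + |x|) ^ (-(1 + δ))

/-- The center `t_k = (2j-1)/2^m` for `k = 2^{m-1} + j`, `1 ≤ j ≤ 2^{m-1}`. -/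
def tpt (m k : ℕ) : ℝ := (2 * ((k : ℝ) - 2 ^ (m - 1)) - 1) / 2 ^ m

/-- The oscillation of a function over a set. -/
def osc (E : Set ℝ) (φ : ℝ → ℝ) : ℝ :=
  sSup {d | ∃ u ∈ E, ∃ v ∈ E, d = |φ u - φ v|}

lemma xi_pos (δ x : ℝ) : 0 < xi δ x :=
  Real.rpow_pos_of_pos (by positivity) _

lemma xi_le_two_rpow_mul_xi {δ y y' : ℝ} (hδ : -1 ≤ δ) (h : |y - y'| ≤ 1) :
    xi δ y ≤ 2 ^ (1 + δ) * xi δ y' := by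
  have hcomp : 1 + |y'| ≤ 2 * (1 + |y|) := by
    have := abs_sub_abs_le_abs_sub y' y
    rw [abs_sub_comm] at this
    linarith [abs_nonneg y]
  have hmono : (2 * (1 + |y|)) ^ (-(1 + δ)) ≤ (1 + |y'|) ^ (-(1 + δ)) :=
    Real.rpow_le_rpow_of_nonpos (by positivity) hcomp (by linarith)
  rw [Real.mul_rpow zero_le_two (by positivity), Real.rpow_neg zero_le_two] at hmono
  have h2 : (0 : ℝ) < 2 ^ (1 + δ) := by positivity
  unfold xi
  calc (1 + |y|) ^ (-(1 + δ)) = 2 ^ (1 + δ) * ((2 ^ (1 + δ))⁻¹ * (1 + |y|) ^ (-(1 + δ))) := by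
        field_simp
    _ ≤ 2 ^ (1 + δ) * (1 + |y'|) ^ (-(1 + δ)) := by gcongr

lemma osc_le_of_forall_abs_sub_le {E : Set ℝ} {φ : ℝ → ℝ} {B : ℝ} (hB : 0 ≤ B)
    (h : ∀ u ∈ E, ∀ v ∈ E, |φ u - φ v| ≤ B) : osc E φ ≤ B :=
  Real.sSup_le (by rintro _ ⟨u, hu, v, hv, rfl⟩; exact h u hu v hv) hB

lemma osc_le_of_holder_xi {J : Set ℝ} {φ : ℝ → ℝ} {A α δ s r t₀ x : ℝ} (hA : 0 ≤ A)
    (hα : 0 ≤ α) (hδ : -1 ≤ δ) (hs : 0 < s) (hsr : s * r ≤ 1)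
    (hdiam : ∀ u ∈ J, ∀ v ∈ J, |u - v| ≤ r) (hx : x ∈ J)
    (hφ : ∀ u ∈ J, ∀ v ∈ J, |φ u - φ v| ≤ A * (s * |u - v|) ^ α * xi δ (s * (u - t₀))) :
    osc J φ ≤ 2 ^ (1 + δ) * A * (s * r) ^ α * xi δ (s * (x - t₀)) := by
  have hr : 0 ≤ r := (abs_nonneg _).trans (hdiam x hx x hx)
  refine osc_le_of_forall_abs_sub_le (by have := xi_pos δ (s * (x - t₀)); positivity)
    fun u hu v hv => (hφ u hu v hv).trans ?_
  have hscale : (s * |u - v|) ^ α ≤ (s * r) ^ α := by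
    gcongr
    exact hdiam u hu v hv
  have hweight : xi δ (s * (u - t₀)) ≤ 2 ^ (1 + δ) * xi δ (s * (x - t₀)) := by
    refine xi_le_two_rpow_mul_xi hδ ?_
    rw [← mul_sub, sub_sub_sub_cancel_right, abs_mul, abs_of_pos hs]
    exact (mul_le_mul_of_nonneg_left (hdiam u hu x hx) hs.le).trans hsr
  calc A * (s * |u - v|) ^ α * xi δ (s * (u - t₀))
      ≤ A * (s * r) ^ α * (2 ^ (1 + δ) * xi δ (s * (x - t₀))) := by
        gcongr
        exact (xi_pos _ _).le
    _ = 2 ^ (1 + δ) * A * (s * r) ^ α * xi δ (s * (x - t₀)) := by ring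

lemma dyadic_Ico_subset_Icc {i N : ℕ} (hi : i < 2 ^ N) :
    Ico ((i : ℝ) / 2 ^ N) (((i : ℝ) + 1) / 2 ^ N) ⊆ Icc 0 1 := by
  have hi' : (i : ℝ) + 1 ≤ 2 ^ N := by exact_mod_cast Nat.succ_le_of_lt hi
  refine Ico_subset_Icc_self.trans (Icc_subset_Icc (by positivity) ?_)
  rwa [div_le_one (by positivity)]

lemma abs_sub_le_of_mem_dyadic_Ico {i N : ℕ} {u v : ℝ}
    (hu : u ∈ Ico ((i : ℝ) / 2 ^ N) (((i : ℝ) + 1) / 2 ^ N))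
    (hv : v ∈ Ico ((i : ℝ) / 2 ^ N) (((i : ℝ) + 1) / 2 ^ N)) :
    |u - v| ≤ ((2 : ℝ) ^ N)⁻¹ := by
  have := Real.dist_le_of_mem_Icc (Ico_subset_Icc_self hu) (Ico_subset_Icc_self hv)
  rw [Real.dist_eq] at this
  exact this.trans_eq (by field_simp; ring)

lemma two_pow_mul_inv_two_pow_pred {m n : ℕ} (hn : 1 ≤ n) :
    (2 : ℝ) ^ m * ((2 : ℝ) ^ (n - 1))⁻¹ = 2 ^ ((m : ℝ) - n + 1) := by
  rw [← Real.rpow_natCast, ← Real.rpow_natCast, ← Real.rpow_neg zero_le_two,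
    ← Real.rpow_add two_pos, Nat.cast_sub hn]
  push_cast
  ring_nf

theorem stmt8_general (δ α c : ℝ) (hδ0 : 0 < δ) (hα0 : 0 < α)
    (hc : 0 < c) :
    ∃ C : ℝ, 0 < C ∧
      ∀ (m : ℕ), 1 ≤ m →
        ∀ φ : ℕ → ℝ → ℝ,
          (∀ k ∈ Finset.Ioc (2 ^ (m - 1)) (2 ^ m),
            ∀ t ∈ Set.Icc (0:ℝ) 1, ∀ t' ∈ Set.Icc (0:ℝ) 1, |t - t'| ≤ ((2 : ℝ) ^ m)⁻¹ →
              |φ k t - φ k t'| ≤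
                c * 2 ^ ((m : ℝ) / 2) * (2 ^ m * |t - t'|) ^ α *
                  xi δ (2 ^ m * (t - tpt m k))) →
          ∀ n : ℕ, m < n → ∀ i : ℕ, i < 2 ^ (n - 1) →
            ∀ (a : ℕ → ℝ),
              ∀ x ∈ Set.Ico ((i : ℝ) / 2 ^ (n - 1)) (((i : ℝ) + 1) / 2 ^ (n - 1)),
                ∑ k ∈ Finset.Ioc (2 ^ (m - 1)) (2 ^ m),
                    |a k| * osc (Set.Ico ((i : ℝ) / 2 ^ (n - 1)) (((i : ℝ) + 1) / 2 ^ (n - 1))) (φ k) ≤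
                  C * (2 : ℝ) ^ (α * ((m : ℝ) - (n : ℝ))) * 2 ^ ((m : ℝ) / 2) *
                    ∑ k ∈ Finset.Ioc (2 ^ (m - 1)) (2 ^ m),
                      |a k| * xi δ (2 ^ m * (x - tpt m k)) := by
  refine ⟨2 ^ (1 + δ) * c * 2 ^ α, by positivity, ?_⟩
  intro m _ φ hφ n hmn i hi a x hx
  have hscale : (2 : ℝ) ^ m * ((2 : ℝ) ^ (n - 1))⁻¹ = 2 ^ ((m : ℝ) - n + 1) :=
    two_pow_mul_inv_two_pow_pred (by omega)
  have hpow_le : (2 : ℝ) ^ m ≤ 2 ^ (n - 1) := pow_le_pow_right₀ one_le_two (by omega)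
  have hscale_le : (2 : ℝ) ^ m * ((2 : ℝ) ^ (n - 1))⁻¹ ≤ 1 := by
    rwa [mul_inv_le_iff₀ (by positivity), one_mul]
  have hscale_pow : ((2 : ℝ) ^ m * ((2 : ℝ) ^ (n - 1))⁻¹) ^ α = 2 ^ α * 2 ^ (α * ((m : ℝ) - n)) := by
    rw [hscale, ← Real.rpow_mul zero_le_two, ← Real.rpow_add two_pos]
    ring_nf
  have hosc : ∀ k ∈ Finset.Ioc (2 ^ (m - 1)) (2 ^ m),
      osc (Ico ((i : ℝ) / 2 ^ (n - 1)) (((i : ℝ) + 1) / 2 ^ (n - 1))) (φ k) ≤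
        2 ^ (1 + δ) * c * 2 ^ α * 2 ^ (α * ((m : ℝ) - n)) * 2 ^ ((m : ℝ) / 2) *
          xi δ (2 ^ m * (x - tpt m k)) := fun k hk => by
    refine (osc_le_of_holder_xi (by positivity) hα0.le (by linarith) (by positivity) hscale_le
      (fun u hu v hv => abs_sub_le_of_mem_dyadic_Ico hu hv) hx fun u hu v hv =>
        hφ k hk u (dyadic_Ico_subset_Icc hi hu) v (dyadic_Ico_subset_Icc hi hv) ?_).trans_eq ?_
    · exact (abs_sub_le_of_mem_dyadic_Ico hu hv).trans (inv_anti₀ (by positivity) hpow_le)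
    · rw [hscale_pow]
      ring
  rw [Finset.mul_sum]
  exact Finset.sum_le_sum fun k hk =>
    (mul_le_mul_of_nonneg_left (hosc k hk) (abs_nonneg _)).trans_eq (by ring)

/-- Oscillation estimate on a dyadic interval `J` of length `2^{-(n-1)}`, `n > m`. -/
theorem stmt8 (δ α c : ℝ) (hδ0 : 0 < δ) (hδ1 : δ < 1) (hα0 : 0 < α) (hα1 : α ≤ 1)
    (hc : 0 < c) :
    ∃ C : ℝ, 0 < C ∧
      ∀ (m : ℕ), 1 ≤ m →
        ∀ φ : ℕ → ℝ → ℝ,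
          (∀ k ∈ Finset.Ioc (2 ^ (m - 1)) (2 ^ m),
            ∀ t ∈ Set.Icc (0:ℝ) 1, ∀ t' ∈ Set.Icc (0:ℝ) 1, |t - t'| ≤ ((2 : ℝ) ^ m)⁻¹ →
              |φ k t - φ k t'| ≤
                c * 2 ^ ((m : ℝ) / 2) * (2 ^ m * |t - t'|) ^ α *
                  xi δ (2 ^ m * (t - tpt m k))) →
          ∀ n : ℕ, m < n → ∀ i : ℕ, i < 2 ^ (n - 1) →
            ∀ (a : ℕ → ℝ),
              ∀ x ∈ Set.Ico ((i : ℝ) / 2 ^ (n - 1)) (((i : ℝ) + 1) / 2 ^ (n - 1)),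
                ∑ k ∈ Finset.Ioc (2 ^ (m - 1)) (2 ^ m),
                    |a k| * osc (Set.Ico ((i : ℝ) / 2 ^ (n - 1)) (((i : ℝ) + 1) / 2 ^ (n - 1))) (φ k) ≤
                  C * (2 : ℝ) ^ (α * ((m : ℝ) - (n : ℝ))) * 2 ^ ((m : ℝ) / 2) *
                    ∑ k ∈ Finset.Ioc (2 ^ (m - 1)) (2 ^ m),
                      |a k| * xi δ (2 ^ m * (x - tpt m k)) :=
  stmt8_general δ α c hδ0 hα0 hc
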